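/- Assume N mod s = 0 and the polyphase norms n(0),...,n(s-1) of x are pairwise distinct. Then the polyphase component selected by APS (the component of maximal ℓ2-norm) applied to the circular shift of x by m bins equals, up to a cyclic shift within the component, the APS output applied to x; in particular the two outputs are equal as multisets of entries. -/

import Mathlib

open Complex Finset

noncomputable section

/-- Circular shift by `m` bins: `(shift N m x) k = x ((k - m) mod N)`. -/
def shift (N : ℕ) (m : ℤ) (x : Fin N → ℂ) : Fin N → ℂ :=
  fun k => x ⟨(((k : ℤ) - m) % N).toNat, by
    have hN : 0 < N := k.pos
    have h1 := Int.emod_nonneg ((k : ℤ) - m) (by exact_mod_cast hN.ne' : (N:ℤ) ≠ 0)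
    have h2 := Int.emod_lt_of_pos ((k : ℤ) - m) (by exact_mod_cast hN : (0:ℤ) < N)
    omega⟩

/-- Polyphase component at offset `j`: the vector `k ↦ x (j + k·s)`. -/
def poly (N s : ℕ) (j : Fin s) (x : Fin N → ℂ) : Fin (N / s) → ℂ :=
  fun k => x ⟨((j : ℕ) + (k : ℕ) * s) % N,
    Nat.mod_lt _ (lt_of_lt_of_le k.pos (Nat.div_le_self N s))⟩

/-- Squared ℓ2 norm of a finite complex vector. -/
def nrm2 {L : ℕ} (v : Fin L → ℂ) : ℝ := ∑ k, ‖v k‖ ^ 2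

/-- ℓ2 norm of a finite complex vector. -/
def l2 {L : ℕ} (v : Fin L → ℂ) : ℝ := Real.sqrt (nrm2 v)

/-- Multiset of entries of a vector. -/
def entries {L : ℕ} (v : Fin L → ℂ) : Multiset ℂ := Finset.univ.val.map v

/-- The element of `Fin s` given by `a mod s`. -/
def modFin (s : ℕ) (hs : 0 < s) (a : ℤ) : Fin s :=
  ⟨(a % s).toNat, by
    have h1 := Int.emod_nonneg a (by exact_mod_cast hs.ne' : (s:ℤ) ≠ 0)
    have h2 := Int.emod_lt_of_pos a (by exact_mod_cast hs : (0:ℤ) < s)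
    omega⟩

/-- Circular convolution `(x ⋆ w)[k] = Σ_j x[(k-j) mod N] w[j]`. -/
def cconv (N : ℕ) (x w : Fin N → ℂ) : Fin N → ℂ :=
  fun k => ∑ j : Fin N, shift N (j : ℤ) x k * w j

/-- Elementwise complex ReLU. -/
def crelu {L : ℕ} (x : Fin L → ℂ) : Fin L → ℂ :=
  fun k => ⟨max (x k).re 0, max (x k).im 0⟩

/-- Global average pooling. -/
def gap {L : ℕ} (x : Fin L → ℂ) : ℂ := (∑ k, x k) / L

/-- Discrete Fourier transform. -/
def dft (N : ℕ) (x : Fin N → ℂ) : Fin N → ℂ :=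
  fun k => ∑ n : Fin N, x n * Complex.exp (-2 * Real.pi * Complex.I * k * n / N)

/-!
Shifting `x` by `m` maps its polyphase component at offset `j - m` (mod `s`) onto the component at
offset `j`, up to a cyclic shift inside the component, because `s ∣ N`. Cyclic shifts preserve
`ℓ²` norms and entries, so the norms of the components of the shifted signal are those of `x`
permuted by `j ↦ j - m`; as they are pairwise distinct, the maximising offsets correspond.
-/

theorem Fin.eq_of_intModEq {n : ℕ} {i i' : Fin n} (h : (i : ℤ) ≡ i' [ZMOD n]) : i = i' := by
  have hlt (k : Fin n) : ((k : ℕ) : ℤ) < n := by exact_mod_cast k.isLt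
  rw [Int.ModEq, Int.emod_eq_of_lt (by positivity) (hlt i),
    Int.emod_eq_of_lt (by positivity) (hlt i')] at h
  exact Fin.ext (by exact_mod_cast h)

theorem coe_modFin {n : ℕ} (hn : 0 < n) (a : ℤ) : ((modFin n hn a : ℕ) : ℤ) = a % n :=
  Int.toNat_of_nonneg (Int.emod_nonneg a (by exact_mod_cast hn.ne'))

theorem coe_modFin_modEq {n : ℕ} (hn : 0 < n) (a : ℤ) :
    ((modFin n hn a : ℕ) : ℤ) ≡ a [ZMOD n] :=
  (coe_modFin hn a).symm ▸ Int.mod_modEq a n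

theorem modFin_eq_of_modEq {n : ℕ} (hn : 0 < n) {a : ℤ} {i : Fin n} (h : a ≡ i [ZMOD n]) :
    modFin n hn a = i :=
  Fin.eq_of_intModEq ((coe_modFin_modEq hn a).trans h)

def shiftPerm (n : ℕ) (t : ℤ) : Equiv.Perm (Fin n) where
  toFun k := modFin n k.pos (k - t)
  invFun k := modFin n k.pos (k + t)
  left_inv k := modFin_eq_of_modEq _ <| by
    simpa using (coe_modFin_modEq k.pos (k - t)).add_right t
  right_inv k := modFin_eq_of_modEq _ <| by
    simpa using (coe_modFin_modEq k.pos (k + t)).sub_right t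

theorem coe_shiftPerm {n : ℕ} (t : ℤ) (k : Fin n) :
    ((shiftPerm n t k : ℕ) : ℤ) = (k - t) % n :=
  coe_modFin k.pos _

theorem coe_shiftPerm_modEq {n : ℕ} (t : ℤ) (k : Fin n) :
    ((shiftPerm n t k : ℕ) : ℤ) ≡ k - t [ZMOD n] :=
  coe_modFin_modEq k.pos _

theorem shift_eq_comp_shiftPerm (n : ℕ) (t : ℤ) (v : Fin n → ℂ) :
    shift n t v = v ∘ shiftPerm n t :=
  rfl

theorem l2_shift {n : ℕ} (t : ℤ) (v : Fin n → ℂ) : l2 (shift n t v) = l2 v := by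
  rw [shift_eq_comp_shiftPerm, l2, l2, nrm2, nrm2]
  exact congrArg Real.sqrt (Equiv.sum_comp (shiftPerm n t) fun k => ‖v k‖ ^ 2)

theorem entries_shift {n : ℕ} (t : ℤ) (v : Fin n → ℂ) : entries (shift n t v) = entries v := by
  rw [shift_eq_comp_shiftPerm, entries, entries, ← Multiset.map_map,
    Multiset.map_univ_val_equiv]

theorem poly_apply_of_modEq {N s : ℕ} (x : Fin N → ℂ) (j : Fin s) (k : Fin (N / s)) {i : Fin N}
    (h : (j + k * s : ℤ) ≡ i [ZMOD N]) : poly N s j x k = x i := by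
  refine congrArg x (Fin.eq_of_intModEq ?_)
  simpa using (Int.mod_modEq _ _).trans h

theorem poly_shift {N s : ℕ} (hd : s ∣ N) (x : Fin N → ℂ) (m : ℤ) (j : Fin s) :
    poly N s j (shift N m x) =
      shift (N / s) (-((j - m) / s)) (poly N s (shiftPerm s m j) x) := by
  funext k
  set q := ((j : ℤ) - m) / s
  set k' := shiftPerm (N / s) (-q) k
  set i := shiftPerm N m ⟨((j : ℕ) + k * s) % N, _⟩
  rw [shift_eq_comp_shiftPerm (N / s), Function.comp_apply,
    poly_apply_of_modEq x (shiftPerm s m j) k' (i := i)]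
  · rfl
  have hN : ((N : ℕ) : ℤ) = ((N / s : ℕ) : ℤ) * s := by exact_mod_cast (Nat.div_mul_cancel hd).symm
  calc ((shiftPerm s m j : ℕ) : ℤ) + k' * s ≡ (shiftPerm s m j : ℕ) + (k + q) * s [ZMOD N] := by
        rw [hN]
        simpa using ((coe_shiftPerm_modEq (-q) k).mul_right' (c := s)).add_left _
    _ = j + k * s - m := by
        rw [coe_shiftPerm]
        linarith [Int.emod_add_mul_ediv ((j : ℤ) - m) s]
    _ ≡ (((j + k * s) % N : ℕ) : ℤ) - m [ZMOD N] := by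
        push_cast
        exact (Int.mod_modEq _ _).symm.sub_right m
    _ ≡ i [ZMOD N] :=
        (coe_shiftPerm_modEq m ⟨_, Nat.mod_lt _ (k.pos.trans_le (Nat.div_le_self N s))⟩).symm

theorem stmt3_general (N s : ℕ) (hd : s ∣ N) (x : Fin N → ℂ) (m : ℤ)
    (hdist : ∀ j j' : Fin s, j ≠ j' → l2 (poly N s j x) ≠ l2 (poly N s j' x))
    (j1 j2 : Fin s)
    (h1 : ∀ j : Fin s, l2 (poly N s j x) ≤ l2 (poly N s j1 x))
    (h2 : ∀ j : Fin s, l2 (poly N s j (shift N m x)) ≤ l2 (poly N s j2 (shift N m x))) :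
    (∃ t : ℤ, poly N s j2 (shift N m x) = shift (N / s) t (poly N s j1 x)) ∧
    entries (poly N s j2 (shift N m x)) = entries (poly N s j1 x) := by
  have hnorm (j : Fin s) :
      l2 (poly N s j (shift N m x)) = l2 (poly N s (shiftPerm s m j) x) := by
    rw [poly_shift hd, l2_shift]
  have hmax : shiftPerm s m j2 = j1 := by
    by_contra hne
    refine hdist _ _ hne (le_antisymm (h1 _) ?_)
    calc l2 (poly N s j1 x)
        = l2 (poly N s ((shiftPerm s m).symm j1) (shift N m x)) := by
          rw [hnorm, Equiv.apply_symm_apply]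
      _ ≤ l2 (poly N s j2 (shift N m x)) := h2 _
      _ = l2 (poly N s (shiftPerm s m j2) x) := hnorm j2
  have hshift := poly_shift hd x m j2
  rw [hmax] at hshift
  exact ⟨⟨_, hshift⟩, by rw [hshift, entries_shift]⟩

theorem stmt3 (N s : ℕ) (hs : 0 < s) (hd : s ∣ N) (x : Fin N → ℂ) (m : ℤ)
    (hdist : ∀ j j' : Fin s, j ≠ j' → l2 (poly N s j x) ≠ l2 (poly N s j' x))
    (j1 j2 : Fin s)
    (h1 : ∀ j : Fin s, l2 (poly N s j x) ≤ l2 (poly N s j1 x))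
    (h2 : ∀ j : Fin s, l2 (poly N s j (shift N m x)) ≤ l2 (poly N s j2 (shift N m x))) :
    (∃ t : ℤ, poly N s j2 (shift N m x) = shift (N / s) t (poly N s j1 x)) ∧
    entries (poly N s j2 (shift N m x)) = entries (poly N s j1 x) :=
  stmt3_general N s hd x m hdist j1 j2 h1 h2
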